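/- arXiv:2505.00696 — 7 statements merged into one kernel-verified Lean document; each statement's English description precedes it below -/
import Mathlib

section
/- Let q = p^e be a prime power, F an imaginary quadratic field, and α ∈ O_F with α·conj(α) = q and p ∤ (α + conj(α)). Then for every integer r > 0 and every algebraic integer β all of whose complex absolute values equal q^{w/2} for some integer w with 0 ≤ w < r, the product α^r·β is not a power of q. In particular, for all s ≥ 2, q^s / α^{2s−1} is not an algebraic integer. -/
/-!
Write `ᾱ` for the conjugate of `α` and `t = α + ᾱ`. Conjugating `α ^ r * β = q ^ s` and adding gives
`q ^ (r - s) * (β + β̄) = α ^ r + ᾱ ^ r`, while `(α + ᾱ) ^ r ≡ α ^ r + ᾱ ^ r` modulo `α * ᾱ = q` among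
algebraic integers. If `s < r`, then `t ^ r / q` is a rational algebraic integer, so `p ∣ q ∣ t ^ r`,
contradicting `p ∤ t`. Comparing absolute values, `r + w = 2 * s`, so `w < r` forces `s < r`; and
`β = q ^ s / α ^ (2 * s - 1)` has `s < 2 * s - 1` once `s ≥ 2`.
-/

/-- A Weil `q`-integer of weight `w`: an algebraic integer all of whose complex
conjugates (roots of its minimal polynomial over `ℚ`) have absolute value `q ^ (w/2)`. -/
def IsWeilInt (q : ℕ) (w : ℕ) (β : ℂ) : Prop :=
  IsIntegral ℤ β ∧
    ∀ γ : ℂ, Polynomial.aeval γ (minpoly ℚ β) = 0 → ‖γ‖ = (q : ℝ) ^ ((w : ℝ) / 2)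

open ComplexConjugate

theorem mul_dvd_add_pow_sub_pow_sub_pow {R : Type*} [CommRing R] (a b : R) {n : ℕ} (hn : n ≠ 0) :
    a * b ∣ (a + b) ^ n - a ^ n - b ^ n := by
  obtain ⟨m, rfl⟩ := Nat.exists_eq_succ_of_ne_zero hn
  induction m with
  | zero => simp
  | succ m ih =>
    have h : (a + b) ^ (m + 2) - a ^ (m + 2) - b ^ (m + 2) =
        (a + b) * ((a + b) ^ (m + 1) - a ^ (m + 1) - b ^ (m + 1)) + a * b * (a ^ m + b ^ m) := by
      ring
    rw [h]
    exact dvd_add (dvd_mul_of_dvd_right (ih m.succ_ne_zero) _) (dvd_mul_right _ _)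

theorem Int.dvd_of_isIntegral_div {K : Type*} [Field K] [CharZero K] {n m : ℤ} (hm : m ≠ 0)
    (h : IsIntegral ℤ ((n : K) / m)) : m ∣ n := by
  have hℚ : IsIntegral ℤ ((n : ℚ) / m) := by
    rw [← isIntegral_algebraMap_iff (algebraMap ℚ K).injective]
    simpa using h
  obtain ⟨k, hk⟩ := IsIntegrallyClosed.isIntegral_iff.mp hℚ
  refine ⟨k, ?_⟩
  rw [algebraMap_int_eq, eq_intCast, eq_div_iff (by exact_mod_cast hm)] at hk
  rw [mul_comm]; exact_mod_cast hk.symm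

theorem IsWeilInt.norm_sq {q w : ℕ} {β : ℂ} (h : IsWeilInt q w β) : ‖β‖ ^ 2 = (q : ℝ) ^ w := by
  rw [h.2 β (minpoly.aeval ℚ β), ← Real.rpow_natCast _ 2, ← Real.rpow_mul (by positivity)]
  norm_num

theorem Complex.sq_norm_eq_of_mul_conj_eq {α : ℂ} {x : ℝ} (h : α * conj α = x) : ‖α‖ ^ 2 = x := by
  rw [Complex.mul_conj, ← Complex.sq_norm] at h
  exact_mod_cast h

theorem IsIntegral.conj {β : ℂ} (h : IsIntegral ℤ β) : IsIntegral ℤ (conj β) :=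
  h.map (starRingEnd ℂ).toIntAlgHom

theorem natCast_dvd_trace_pow_of_pow_mul_eq_pow {α β : ℂ} {q : ℕ} {t : ℤ} {r s : ℕ}
    (hα : IsIntegral ℤ α) (hβ : IsIntegral ℤ β) (hq : q ≠ 0)
    (hnorm : α * conj α = q) (htr : α + conj α = t) (hsr : s < r) (h : α ^ r * β = q ^ s) :
    (q : ℤ) ∣ t ^ r := by
  have hqC : (q : ℂ) ≠ 0 := Nat.cast_ne_zero.2 hq
  have hconj : conj α ^ r * conj β = q ^ s := by simpa using congrArg conj h
  have htrace : (q : ℂ) ^ (r - s) * (β + conj β) = α ^ r + conj α ^ r := by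
    refine mul_left_cancel₀ (pow_ne_zero s hqC) ?_
    calc (q : ℂ) ^ s * (q ^ (r - s) * (β + conj β)) = (α * conj α) ^ r * (β + conj β) := by
          rw [hnorm, ← mul_assoc, ← pow_add, Nat.add_sub_cancel' hsr.le]
      _ = (α ^ r * β) * conj α ^ r + (conj α ^ r * conj β) * α ^ r := by ring
      _ = q ^ s * (α ^ r + conj α ^ r) := by rw [h, hconj]; ring
  obtain ⟨c, hc⟩ := mul_dvd_add_pow_sub_pow_sub_pow (R := integralClosure ℤ ℂ)
    ⟨α, hα⟩ ⟨conj α, hα.conj⟩ (by omega : r ≠ 0)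
  have hc' : (α + conj α) ^ r - α ^ r - conj α ^ r = α * conj α * c := congrArg Subtype.val hc
  refine Int.dvd_of_isIntegral_div (K := ℂ) (by exact_mod_cast hq) ?_
  have hquot : ((t ^ r : ℤ) : ℂ) / ((q : ℤ) : ℂ) = q ^ (r - s - 1) * (β + conj β) + c := by
    rw [div_eq_iff (by exact_mod_cast hqC)]
    have hpow : (q : ℂ) ^ (r - s) = q ^ (r - s - 1) * q := by
      rw [← pow_succ, Nat.sub_add_cancel (Nat.sub_pos_of_lt hsr)]
    push_cast
    rw [← htr]
    linear_combination hc' - htrace + (β + conj β) * hpow + (c : ℂ) * hnorm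
  rw [hquot]
  exact (((isIntegral_natCast q).pow _).mul (hβ.add hβ.conj)).add c.2

theorem add_eq_two_mul_of_pow_mul_eq_pow {α β : ℂ} {q r w s : ℕ} (hq : 2 ≤ q)
    (hα : ‖α‖ ^ 2 = q) (hβ : ‖β‖ ^ 2 = (q : ℝ) ^ w) (h : α ^ r * β = q ^ s) : r + w = 2 * s := by
  have hreal : (q : ℝ) ^ (r + w) = (q : ℝ) ^ (2 * s) := by
    calc (q : ℝ) ^ (r + w) = (‖α‖ ^ 2) ^ r * ‖β‖ ^ 2 := by rw [hα, hβ, pow_add]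
      _ = ‖α ^ r * β‖ ^ 2 := by rw [norm_mul, norm_pow]; ring
      _ = (q : ℝ) ^ (2 * s) := by rw [h, norm_pow, Complex.norm_natCast]; ring
  exact Nat.pow_right_injective hq (by exact_mod_cast hreal)

theorem stmt1_general (p e : ℕ) (hp : p.Prime) (he : 1 ≤ e) (q : ℕ) (hq : q = p ^ e)
    (α : ℂ) (hint : IsIntegral ℤ α)
    (hnorm : α * (starRingEnd ℂ) α = q)
    (htr : ∃ t : ℤ, α + (starRingEnd ℂ) α = (t : ℂ) ∧ ¬ ((p : ℤ) ∣ t)) :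
    (∀ r : ℕ, 0 < r → ∀ w : ℕ, w < r → ∀ β : ℂ, IsWeilInt q w β →
      ∀ s : ℕ, α ^ r * β ≠ (q : ℂ) ^ s) ∧
    (∀ s : ℕ, 2 ≤ s → ¬ IsIntegral ℤ ((q : ℂ) ^ s / α ^ (2 * s - 1))) := by
  obtain ⟨t, htr, hpt⟩ := htr
  have hpq : p ∣ q := hq ▸ dvd_pow_self p (by omega)
  have hq2 : 2 ≤ q := hp.two_le.trans (Nat.le_of_dvd (hq ▸ pow_pos hp.pos e) hpq)
  have key (r s : ℕ) (β : ℂ) (hsr : s < r) (hβ : IsIntegral ℤ β) : α ^ r * β ≠ q ^ s :=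
    fun h => hpt <| Int.Prime.dvd_pow' hp <| (Int.natCast_dvd_natCast.2 hpq).trans
      (natCast_dvd_trace_pow_of_pow_mul_eq_pow hint hβ (by omega) hnorm htr hsr h)
  refine ⟨fun r _ w hwr β hβ s h => key r s β ?_ hβ.1 h,
    fun s hs hβ => key (2 * s - 1) s _ (by omega) hβ ?_⟩
  · have := add_eq_two_mul_of_pow_mul_eq_pow hq2
      (Complex.sq_norm_eq_of_mul_conj_eq (by exact_mod_cast hnorm)) hβ.norm_sq h
    omega
  · have hα : α ≠ 0 := by
      rintro rfl
      rw [zero_mul, eq_comm, Nat.cast_eq_zero] at hnorm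
      omega
    field_simp

/-- With `α` a non-real algebraic integer satisfying `α * conj α = q = p ^ e`
and `p ∤ Tr(α) = α + conj α` (the Frobenius eigenvalue of an ordinary elliptic curve,
generating an imaginary quadratic field), for every `r > 0` and every Weil `q`-integer `β`
of weight `w` with `0 ≤ w < r`, the product `α ^ r * β` is not a power of `q`; in
particular for `s ≥ 2`, `q ^ s / α ^ (2s - 1)` is not an algebraic integer. -/
theorem stmt1 (p e : ℕ) (hp : p.Prime) (he : 1 ≤ e) (q : ℕ) (hq : q = p ^ e)
    (α : ℂ) (hint : IsIntegral ℤ α) (himag : α.im ≠ 0)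
    (hnorm : α * (starRingEnd ℂ) α = q)
    (htr : ∃ t : ℤ, α + (starRingEnd ℂ) α = (t : ℂ) ∧ ¬ ((p : ℤ) ∣ t)) :
    (∀ r : ℕ, 0 < r → ∀ w : ℕ, w < r → ∀ β : ℂ, IsWeilInt q w β →
      ∀ s : ℕ, α ^ r * β ≠ (q : ℂ) ^ s) ∧
    (∀ s : ℕ, 2 ≤ s → ¬ IsIntegral ℤ ((q : ℂ) ^ s / α ^ (2 * s - 1))) :=
  stmt1_general p e hp he q hq α hint hnorm htr
end

section
/- Let q = p^e be a prime power, F an imaginary quadratic field, and α ∈ O_F with α·conj(α) = q and p ∤ (α + conj(α)). Then for any Weil q-integer β of weight one with β ∉ {α, conj(α)}, and any integers r, s, we have α^r·β ≠ q^s. -/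
/-!
Write `t = α + ᾱ`. Comparing absolute values in `α ^ r * β = q ^ s` forces `r = 2s - 1`, and then
`β * q ^ u = γ ^ (2u + 1)` for some `u ≥ 0` and `γ ∈ {α, ᾱ}`; `u = 0` would give `β = γ`.
For `u ≥ 1`, the trace `β + β̄ = (γ ^ (2u+1) + γ̄ ^ (2u+1)) / q ^ u` is a rational algebraic
integer, hence an integer, so `q` divides the power sum `γ ^ (2u+1) + γ̄ ^ (2u+1)`. By Newton's
recurrence this power sum is `≡ t ^ (2u+1) mod q`, so `p ∣ t`.
-/

theorem exists_intCast_eq_pow_add_pow_modEq {R : Type*} [CommRing R] {a b : R} {t q : ℤ}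
    (hsum : a + b = t) (hprod : a * b = q) (n : ℕ) :
    ∃ k : ℤ, a ^ (n + 1) + b ^ (n + 1) = k ∧ k ≡ t ^ (n + 1) [ZMOD q] := by
  induction n using Nat.twoStepInduction with
  | zero => exact ⟨t, by simpa using hsum, by simp [Int.ModEq]⟩
  | one =>
    refine ⟨t ^ 2 - 2 * q, ?_, (Int.modEq_iff_dvd.mpr ⟨-2, by ring⟩).symm⟩
    push_cast
    linear_combination (a + b + t) * hsum - 2 * hprod
  | more n ih₁ ih₂ =>
    obtain ⟨k₁, hk₁, hk₁q⟩ := ih₁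
    obtain ⟨k₂, hk₂, hk₂q⟩ := ih₂
    refine ⟨t * k₂ - q * k₁, ?_, ?_⟩
    · push_cast
      linear_combination (a + b) * hk₂ - a * b * hk₁ + (k₂ : R) * hsum - (k₁ : R) * hprod
    · have hq : q * k₁ ≡ 0 [ZMOD q] := Int.modEq_zero_iff_dvd.mpr (dvd_mul_right q k₁)
      simpa [pow_succ, mul_comm] using (hk₂q.mul_left t).sub hq

theorem dvd_of_isIntegral_mul_eq {K : Type*} [Field K] [CharZero K] {x : K}
    (hx : IsIntegral ℤ x) {m k : ℤ} (hm : m ≠ 0) (h : x * m = k) : m ∣ k := by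
  have hm' : (m : ℚ) ≠ 0 := by exact_mod_cast hm
  have hxq : x = algebraMap ℚ K (k / m) := by
    rw [eq_comm, map_div₀, div_eq_iff (by simpa using hm)]
    simpa using h.symm
  rw [hxq, isIntegral_algebraMap_iff (algebraMap ℚ K).injective] at hx
  obtain ⟨z, hz⟩ := IsIntegrallyClosed.isIntegral_iff.mp hx
  refine ⟨z, ?_⟩
  rw [eq_div_iff hm'] at hz
  have hkz : (k : ℚ) = m * z := by simpa [mul_comm] using hz.symm
  exact_mod_cast hkz

theorem dvd_pow_of_isIntegral_mul_pow_eq {β γ : ℂ} {t q : ℤ} (hβ : IsIntegral ℤ β)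
    (hsum : γ + starRingEnd ℂ γ = t) (hprod : γ * starRingEnd ℂ γ = q) (hq : q ≠ 0)
    {u n : ℕ} (hu : u ≠ 0) (h : β * q ^ u = γ ^ (n + 1)) : q ∣ t ^ (n + 1) := by
  obtain ⟨k, hk, hkt⟩ := exists_intCast_eq_pow_add_pow_modEq hsum hprod n
  have hconj : starRingEnd ℂ β * q ^ u = starRingEnd ℂ γ ^ (n + 1) := by
    simpa using congrArg (starRingEnd ℂ) h
  have htrace : (β + starRingEnd ℂ β) * ((q ^ u : ℤ) : ℂ) = k := by
    push_cast
    linear_combination h + hconj + hk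
  have htrace_int : IsIntegral ℤ (β + starRingEnd ℂ β) :=
    hβ.add (hβ.map (starRingEnd ℂ).toIntAlgHom)
  have hqk : q ∣ k :=
    (dvd_pow_self q hu).trans (dvd_of_isIntegral_mul_eq htrace_int (pow_ne_zero u hq) htrace)
  simpa using hqk.add hkt.dvd

theorem eq_two_mul_sub_one_of_zpow_mul_eq {α β : ℂ} {q : ℝ} (hq : 1 < q)
    (hα : ‖α‖ ^ 2 = q) (hβ : ‖β‖ = ‖α‖) {r s : ℤ} (h : α ^ r * β = q ^ s) : r = 2 * s - 1 := by
  have hα1 : 1 < ‖α‖ := by nlinarith [norm_nonneg α]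
  have hnorm := congrArg norm h
  rw [norm_mul, norm_zpow, norm_zpow, hβ, Complex.norm_real, Real.norm_of_nonneg (by linarith),
    ← hα, ← zpow_natCast, ← zpow_mul, ← zpow_add_one₀ (by positivity)] at hnorm
  have := (zpow_right_inj₀ (by positivity) hα1.ne').mp hnorm
  push_cast at this
  linarith

theorem exists_mul_pow_eq_pow_of_zpow_mul_eq {K : Type*} [Field K] {a b c x : K} (hc : c ≠ 0)
    (habc : a * b = c) {s : ℤ} (h : a ^ (2 * s - 1) * x = c ^ s) :
    ∃ u : ℕ, x * c ^ u = a ^ (2 * u + 1) ∨ x * c ^ u = b ^ (2 * u + 1) := by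
  have ha : a ≠ 0 := left_ne_zero_of_mul (habc ▸ hc)
  rcases le_or_gt s 0 with hs | hs
  · obtain ⟨u, hu⟩ := Int.eq_ofNat_of_zero_le (neg_nonneg.mpr hs)
    refine ⟨u, Or.inl ?_⟩
    rw [show 2 * s - 1 = -((2 * u + 1 : ℕ) : ℤ) by omega, show s = -(u : ℤ) by omega,
      zpow_neg, zpow_neg, zpow_natCast, zpow_natCast] at h
    field_simp at h
    linear_combination h
  · obtain ⟨u, hu⟩ := Int.eq_ofNat_of_zero_le (by omega : 0 ≤ s - 1)
    refine ⟨u, Or.inr ?_⟩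
    rw [show 2 * s - 1 = ((2 * u + 1 : ℕ) : ℤ) by omega, show s = ((u + 1 : ℕ) : ℤ) by omega,
      zpow_natCast, zpow_natCast] at h
    apply mul_left_cancel₀ (pow_ne_zero (u + 1) hc)
    subst habc
    linear_combination b ^ (2 * u + 1) * h

theorem mul_pow_ne_pow_of_isIntegral {β γ : ℂ} {t q p : ℤ} (hβ : IsIntegral ℤ β)
    (hβγ : β ≠ γ) (hsum : γ + starRingEnd ℂ γ = t) (hprod : γ * starRingEnd ℂ γ = q)
    (hq : q ≠ 0) (hp : Prime p) (hpq : p ∣ q) (hpt : ¬ p ∣ t) (u : ℕ) :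
    β * q ^ u ≠ γ ^ (2 * u + 1) := by
  intro h
  rcases Nat.eq_zero_or_pos u with rfl | hu
  · exact hβγ (by simpa using h)
  · exact hpt (hp.dvd_of_dvd_pow
      (hpq.trans (dvd_pow_of_isIntegral_mul_pow_eq hβ hsum hprod hq hu.ne' h)))

theorem stmt2_general (p e : ℕ) (hp : p.Prime) (he : 1 ≤ e) (q : ℕ) (hq : q = p ^ e)
    (α : ℂ) (hnorm : α * (starRingEnd ℂ) α = q)
    (htr : ∃ t : ℤ, α + (starRingEnd ℂ) α = (t : ℂ) ∧ ¬ ((p : ℤ) ∣ t))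
    (β : ℂ) (hβ : IsWeilInt q 1 β) (hβα : β ≠ α) (hβα' : β ≠ (starRingEnd ℂ) α) :
    ∀ r s : ℤ, α ^ r * β ≠ (q : ℂ) ^ s := by
  obtain ⟨t, ht, hpt⟩ := htr
  intro r s h
  have hq1 : 1 < q := hq ▸ Nat.one_lt_pow (by omega) hp.one_lt
  have hpq : (p : ℤ) ∣ q := Int.natCast_dvd_natCast.mpr (hq ▸ dvd_pow_self p (by omega))
  have hnorm' : α * starRingEnd ℂ α = ((q : ℤ) : ℂ) := by exact_mod_cast hnorm
  have hαnorm : ‖α‖ ^ 2 = q := by exact_mod_cast (Complex.mul_conj' α).symm.trans hnorm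
  have hβnorm : ‖β‖ = ‖α‖ := by
    rw [hβ.2 β (minpoly.aeval ℚ β), ← hαnorm, Nat.cast_one, ← Real.sqrt_eq_rpow,
      Real.sqrt_sq (norm_nonneg α)]
  obtain rfl := eq_two_mul_sub_one_of_zpow_mul_eq (by exact_mod_cast hq1) hαnorm hβnorm
    (by simpa using h)
  have hq0 : (q : ℤ) ≠ 0 := by omega
  have hp' : Prime (p : ℤ) := Nat.prime_iff_prime_int.mp hp
  obtain ⟨u, hu | hu⟩ :=
    exists_mul_pow_eq_pow_of_zpow_mul_eq (by exact_mod_cast hq0) hnorm h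
  · exact mul_pow_ne_pow_of_isIntegral hβ.1 hβα ht hnorm' hq0 hp' hpq hpt u
      (by exact_mod_cast hu)
  · exact mul_pow_ne_pow_of_isIntegral hβ.1 hβα' (by rwa [Complex.conj_conj, add_comm])
      (by rwa [Complex.conj_conj, mul_comm]) hq0 hp' hpq hpt u (by exact_mod_cast hu)

/-- With `α` as before (non-real algebraic integer with `α * conj α = q = p^e`,
`p ∤ α + conj α`), for any Weil `q`-integer `β` of weight one with `β ∉ {α, conj α}`,
and any integers `r`, `s`, we have `α ^ r * β ≠ q ^ s`. -/
theorem stmt2 (p e : ℕ) (hp : p.Prime) (he : 1 ≤ e) (q : ℕ) (hq : q = p ^ e)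
    (α : ℂ) (hint : IsIntegral ℤ α) (himag : α.im ≠ 0)
    (hnorm : α * (starRingEnd ℂ) α = q)
    (htr : ∃ t : ℤ, α + (starRingEnd ℂ) α = (t : ℂ) ∧ ¬ ((p : ℤ) ∣ t))
    (β : ℂ) (hβ : IsWeilInt q 1 β) (hβα : β ≠ α) (hβα' : β ≠ (starRingEnd ℂ) α) :
    ∀ r s : ℤ, α ^ r * β ≠ (q : ℂ) ^ s :=
  stmt2_general p e hp he q hq α hnorm htr β hβ hβα hβα'
end

section
/- Let V be a finite-dimensional vector space over a field of characteristic zero, let T : V → V be a linear endomorphism, and let n ≥ 1. If the generalized eigenspace of T^n for the eigenvalue 1 equals the eigenspace of T^n for eigenvalue 1 (i.e., 1 is a semisimple eigenvalue of T^n), then 1 is a semisimple eigenvalue of T, i.e., ker((T − 1)^k) = ker(T − 1) for all k ≥ 1. -/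
/-!
Since `T ^ n - 1 = (∑ i < n, T ^ i) * (T - 1)` and `∑ i < n, T ^ i` acts as multiplication by `n`
on `ker (T - 1)`, a vector `x` with `(T - 1) ^ 2 x = 0` satisfies `(T ^ n - 1) x = n • (T - 1) x`
and `(T ^ n - 1) ^ 2 x = 0`. Semisimplicity of `1` for `T ^ n` then gives `n • (T - 1) x = 0`,
hence `(T - 1) x = 0` in characteristic zero. So `ker ((T - 1) ^ 2) = ker (T - 1)`, and the kernels
of all higher powers stabilise from there.
-/

namespace Module.End

open Finset LinearMap

variable {R M : Type*} [Ring R] [AddCommGroup M] [Module R M]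

lemma ker_sub_one_le_ker_pow_sub_one (T : End R M) (n : ℕ) :
    ker (T - 1) ≤ ker (T ^ n - 1) := by
  rw [← geom_sum_mul, mul_eq_comp]
  exact ker_le_ker_comp _ _

lemma pow_sub_one_apply_eq_nsmul {T : End R M} {x : M} (hx : ((T - 1) ^ 2 : End R M) x = 0)
    (n : ℕ) :
    (T ^ n - 1) x = n • (T - 1) x := by
  have hfix : T ((T - 1) x) = (T - 1) x := by
    rw [sq, mul_apply, LinearMap.sub_apply, one_apply, sub_eq_zero] at hx
    exact hx
  rw [← geom_sum_mul, mul_apply, LinearMap.sum_apply]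
  simp only [pow_apply, Function.iterate_fixed hfix, sum_const, card_range]

lemma ker_sub_one_sq_le_of_ker_pow_sub_one_sq_le [IsAddTorsionFree M] (T : End R M) {n : ℕ}
    (hn : n ≠ 0) (h : ker ((T ^ n - 1) ^ 2 : End R M) ≤ ker (T ^ n - 1)) :
    ker ((T - 1) ^ 2 : End R M) ≤ ker (T - 1) := by
  intro x hx
  have hxn := pow_sub_one_apply_eq_nsmul hx n
  have hy : (T - 1) x ∈ ker (T - 1) := by
    rw [mem_ker, ← mul_apply, ← sq]
    exact hx
  have hx2 : x ∈ ker ((T ^ n - 1) ^ 2) := by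
    rw [mem_ker, sq, mul_apply, hxn, map_nsmul, ker_sub_one_le_ker_pow_sub_one T n hy, nsmul_zero]
  have hnx : n • (T - 1) x = 0 := by
    rw [← hxn]
    exact h hx2
  exact (nsmul_eq_zero_iff.mp hnx).resolve_right hn

end Module.End

theorem stmt4_general (K : Type*) [Field K] [CharZero K]
    (V : Type*) [AddCommGroup V] [Module K V]
    (T : Module.End K V) (n : ℕ) (hn : 1 ≤ n)
    (hss : ∀ k : ℕ, 1 ≤ k →
      LinearMap.ker ((T ^ n - 1) ^ k) = LinearMap.ker (T ^ n - 1)) :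
    ∀ k : ℕ, 1 ≤ k → LinearMap.ker ((T - 1) ^ k) = LinearMap.ker (T - 1) := by
  intro k hk
  have : IsAddTorsionFree V := .of_isTorsionFree K V
  have hsq : LinearMap.ker ((T - 1) ^ 2) = LinearMap.ker (T - 1) :=
    le_antisymm
      (Module.End.ker_sub_one_sq_le_of_ker_pow_sub_one_sq_le T (by omega) (hss 2 one_le_two).le)
      (by rw [sq, Module.End.mul_eq_comp]; exact LinearMap.ker_le_ker_comp _ _)
  obtain ⟨m, rfl⟩ := Nat.exists_eq_add_of_le hk
  simpa using (Module.End.ker_pow_constant (k := 1) (by simpa using hsq.symm) m).symm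

/-- If `V` is a finite-dimensional vector space over a characteristic-zero
field, `T : V → V` linear, `n ≥ 1`, and the eigenvalue `1` of `T ^ n` is semisimple
(generalized eigenspace = eigenspace), then the eigenvalue `1` of `T` is semisimple:
`ker((T - 1) ^ k) = ker(T - 1)` for all `k ≥ 1`. -/
theorem stmt4 (K : Type*) [Field K] [CharZero K]
    (V : Type*) [AddCommGroup V] [Module K V] [FiniteDimensional K V]
    (T : Module.End K V) (n : ℕ) (hn : 1 ≤ n)
    (hss : ∀ k : ℕ, 1 ≤ k →
      LinearMap.ker ((T ^ n - 1) ^ k) = LinearMap.ker (T ^ n - 1)) :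
    ∀ k : ℕ, 1 ≤ k → LinearMap.ker ((T - 1) ^ k) = LinearMap.ker (T - 1) :=
  stmt4_general K V T n hn hss
end

section
/- Let k be a finite field with q elements, where q = p^e, let α be a Weil q-integer of weight 1 with α·conj(α) = q and p ∤ Tr(α), and set F = ℚ(α), an imaginary quadratic field. For g ≥ 1, define the Frobenius characteristic polynomial χ_g(t) = (1 − α^g t)(1 − conj(α)^g t). Then for all g ≥ 1 and every integer s, the value χ_g(q^{−s}) = (1 − α^g q^{−s})(1 − conj(α)^g q^{−s}) is nonzero; equivalently, α^g ≠ q^s and conj(α)^g ≠ q^s for all g ≥ 1 and all s ∈ ℤ. -/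
/-- For `α` the Frobenius eigenvalue of an ordinary elliptic curve over
`𝔽_q` (an algebraic integer with `α · conj α = q` and `p ∤ Tr(α) = α + conj α`, where
`q = p ^ e`, generating the imaginary quadratic field `F = ℚ(α)`), for all `g ≥ 1` and
all integers `s`, `α ^ g ≠ q ^ s` and `conj(α) ^ g ≠ q ^ s`; equivalently, the
characteristic polynomial `χ_g(t) = (1 - α^g t)(1 - conj(α)^g t)` does not vanish at
`t = q^{-s}`. -/
theorem stmt9 (p e : ℕ) (hp : p.Prime) (he : 1 ≤ e) (q : ℕ) (hq : q = p ^ e)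
    (α : ℂ) (hint : IsIntegral ℤ α) (himag : α.im ≠ 0)
    (hnorm : α * (starRingEnd ℂ) α = q)
    (htr : ∃ t : ℤ, α + (starRingEnd ℂ) α = (t : ℂ) ∧ ¬ ((p : ℤ) ∣ t)) :
    ∀ g : ℕ, 1 ≤ g → ∀ s : ℤ,
      (α ^ g ≠ (q : ℂ) ^ s ∧ (starRingEnd ℂ) α ^ g ≠ (q : ℂ) ^ s) ∧
      (1 - α ^ g * (q : ℂ) ^ (-s)) * (1 - (starRingEnd ℂ) α ^ g * (q : ℂ) ^ (-s)) ≠ 0 := by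
  obtain ⟨t, ht, hpt⟩ := htr
  have hq0 : (q : ℂ) ≠ 0 := by
    rw [hq]; push_cast; exact pow_ne_zero _ (Nat.cast_ne_zero.mpr hp.ne_zero)
  have hconj : (starRingEnd ℂ) α = (t : ℂ) - α := by linear_combination ht
  have hsq : α ^ 2 = (t : ℂ) * α - q := by
    have h2 := hnorm; rw [hconj] at h2; linear_combination -h2
  have hpq : (p : ℤ) ∣ (q : ℤ) := by
    rw [hq]; push_cast; exact dvd_pow_self _ (by omega)
  have key : ∀ n : ℕ, ∃ a b : ℤ, α ^ (n + 1) = (a : ℂ) + (b : ℂ) * α ∧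
      (p : ℤ) ∣ a ∧ (b : ZMod p) = (t : ZMod p) ^ n := by
    intro n
    induction n with
    | zero => exact ⟨0, 1, by push_cast; ring, dvd_zero _, by push_cast; ring⟩
    | succ n ih =>
      obtain ⟨a, b, h1, h2, h3⟩ := ih
      refine ⟨-q * b, a + t * b, ?_, ?_, ?_⟩
      · push_cast
        linear_combination α * h1 + (b : ℂ) * hsq
      · exact Dvd.dvd.mul_right (dvd_neg.mpr hpq) _
      · have ha : (a : ZMod p) = 0 := by
          rw [ZMod.intCast_zmod_eq_zero_iff_dvd]; exact_mod_cast h2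
        push_cast
        rw [ha, h3]; ring
  have main : ∀ g : ℕ, 1 ≤ g → ∀ s : ℤ, α ^ g ≠ (q : ℂ) ^ s := by
    intro g hg s h
    obtain ⟨a, b, h1, h2, h3⟩ := key (g - 1)
    rw [Nat.sub_add_cancel hg] at h1
    have hreal : ((q : ℂ) ^ s).im = 0 := by
      have : (q : ℂ) = ((q : ℝ) : ℂ) := by push_cast; rfl
      rw [this, ← Complex.ofReal_zpow, Complex.ofReal_im]
    have him : ((a : ℂ) + (b : ℂ) * α).im = 0 := by rw [← h1, h, hreal]
    have hb : (b : ℝ) * α.im = 0 := by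
      simpa [Complex.add_im, Complex.mul_im] using him
    have hb0 : b = 0 := by
      rcases mul_eq_zero.mp hb with h' | h'
      · exact_mod_cast h'
      · exact absurd h' himag
    rw [hb0] at h3
    have : (p : ℤ) ∣ t ^ (g - 1) := by
      rw [← ZMod.intCast_zmod_eq_zero_iff_dvd]
      push_cast
      rw [← h3]; simp
    exact hpt (Int.Prime.dvd_pow' hp this)
  intro g hg s
  have h1 : α ^ g ≠ (q : ℂ) ^ s := main g hg s
  have h2 : (starRingEnd ℂ) α ^ g ≠ (q : ℂ) ^ s := by
    intro h
    apply main g hg s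
    have := congrArg (starRingEnd ℂ) h
    simp only [map_pow, map_zpow₀] at this
    rwa [RingHomInvPair.comp_apply_eq, show (starRingEnd ℂ) (q : ℂ) = (q : ℂ) by
      simp [Complex.conj_natCast]] at this
  refine ⟨⟨h1, h2⟩, ?_⟩
  have hqs : (q : ℂ) ^ (-s) ≠ 0 := zpow_ne_zero _ hq0
  apply mul_ne_zero
  · intro h
    apply h1
    have : α ^ g * (q : ℂ) ^ (-s) = 1 := by linear_combination -h
    field_simp [zpow_neg] at this
    exact (div_eq_one_iff_eq (zpow_ne_zero _ hq0)).mp (by rw [div_eq_mul_inv, ← zpow_neg]; exact this)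
  · intro h
    apply h2
    have : (starRingEnd ℂ) α ^ g * (q : ℂ) ^ (-s) = 1 := by linear_combination -h
    field_simp [zpow_neg] at this
    exact (div_eq_one_iff_eq (zpow_ne_zero _ hq0)).mp (by rw [div_eq_mul_inv, ← zpow_neg]; exact this)
end

section
/- Let q be a prime power, and for i = 1, …, n and j = 1, …, n, let α_i, β_j be Weil q-integers of weight 1 none of whose traces are divisible by p (where q is a power of p), and let r_i, s_i, t_j, u_j be integers with r_i, t_j ≥ 1. Suppose the polynomial identity ∏_i (1 − q^{−s_i} α_i^{r_i} t)(1 − q^{−s_i} conj(α_i)^{r_i} t) = ∏_j (1 − q^{−u_j} β_j^{t_j} t)(1 − q^{−u_j} conj(β_j)^{t_j} t) holds in ℂ[t]. Then there is a permutation σ of {1,…,n} such that for all i: r_i = t_{σ(i)}, s_i = u_{σ(i)}, and ℚ(α_i) = ℚ(β_{σ(i)}). -/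
open Polynomial IntermediateField ComplexConjugate

theorem Multiset.eq_of_forall_prod_map_one_sub_mul_eq {K : Type*} [Field K] [Infinite K]
    {s t : Multiset K} (hcard : Multiset.card s = Multiset.card t)
    (h : ∀ z, (s.map fun a => 1 - a * z).prod = (t.map fun a => 1 - a * z).prod) : s = t := by
  have eval_eq (s : Multiset K) {x : K} (hx : x ≠ 0) :
      ((s.map fun a => X - C a).prod).eval x
        = x ^ Multiset.card s * (s.map fun a => 1 - a * x⁻¹).prod := by
    induction s using Multiset.induction_on with
    | empty => simp
    | cons a s ih =>
      simp only [Multiset.map_cons, Multiset.prod_cons, eval_mul, ih, Multiset.card_cons]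
      field_simp
      simp only [eval_sub, eval_X, eval_C, Multiset.prod_map_div, Multiset.map_const',
        Multiset.prod_replicate]
      ring
  rw [← roots_multiset_prod_X_sub_C s, ← roots_multiset_prod_X_sub_C t]
  congr 1
  refine eq_of_infinite_eval_eq _ _ ((Set.finite_singleton 0).infinite_compl.mono fun x hx => ?_)
  simp only [Set.mem_ofPred_eq, eval_eq _ hx, hcard, h]

theorem exists_perm_eq_comp_of_map_univ_eq {ι γ : Type*} [Fintype ι] {f g : ι → γ}
    (h : Finset.univ.val.map f = Finset.univ.val.map g) :
    ∃ σ : Equiv.Perm ι, ∀ i, g (σ i) = f i := by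
  classical
  have card_fiber (c : γ) : Fintype.card {i // f i = c} = Fintype.card {i // g i = c} := by
    have := congrArg (Multiset.count c) h
    simp only [Multiset.count_map] at this
    simp only [Fintype.card_subtype, Finset.card_def, Finset.filter_val]
    convert this using 3 <;> exact eq_comm
  exact ⟨Equiv.ofFiberEquiv fun c => Fintype.equivOfCardEq (card_fiber c),
    Equiv.ofFiberEquiv_map _⟩

theorem exists_perm_eq_or_eq_of_forall_prod_eq {K ι : Type*} [Field K] [Infinite K] [Fintype ι]
    {φ : K → K} (hφ : Function.Involutive φ) {f g : ι → K}
    (h : ∀ z, ∏ i, (1 - f i * z) * (1 - φ (f i) * z) = ∏ i, (1 - g i * z) * (1 - φ (g i) * z)) :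
    ∃ σ : Equiv.Perm ι, ∀ i, f i = g (σ i) ∨ f i = φ (g (σ i)) := by
  classical
  let roots (f : ι → K) : Multiset K := Finset.univ.val.map f + Finset.univ.val.map (φ ∘ f)
  have prod_roots (f : ι → K) (z : K) :
      ((roots f).map fun a => 1 - a * z).prod = ∏ i, (1 - f i * z) * (1 - φ (f i) * z) := by
    simp only [roots, Multiset.map_add, Multiset.prod_add, Multiset.map_map,
      Finset.prod_mul_distrib]
    rfl
  have hroots : roots f = roots g :=
    Multiset.eq_of_forall_prod_map_one_sub_mul_eq (by simp [roots]) fun z => by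
      rw [prod_roots, prod_roots, h]
  let pair (x : K) : Multiset K := {x, φ x}
  have pair_apply_φ (x : K) : pair (φ x) = pair x := by
    simp only [pair, hφ x]
    exact Multiset.pair_comm _ _
  -- each pair occurs twice in `(roots f).map pair`, once from `f i` and once from `φ (f i)`
  have hpairs : Finset.univ.val.map (fun i => pair (f i))
      = Finset.univ.val.map (fun i => pair (g i)) := by
    have h2 := congrArg (Multiset.map pair) hroots
    simp only [roots, Multiset.map_add, Multiset.map_map, Function.comp_def, pair_apply_φ] at h2
    ext x
    have := congrArg (Multiset.count x) h2
    simp only [Multiset.count_add] at this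
    omega
  obtain ⟨σ, hσ⟩ := exists_perm_eq_comp_of_map_univ_eq hpairs
  refine ⟨σ, fun i => ?_⟩
  have hmem : f i ∈ pair (g (σ i)) := by
    rw [show pair (g (σ i)) = pair (f i) from hσ i]
    simp [pair]
  simpa [pair] using hmem

theorem IsWeilInt.mul_conj_self {q : ℕ} {α : ℂ} (h : IsWeilInt q 1 α) : α * conj α = q := by
  have hnorm : ‖α‖ = √q := by
    rw [h.2 α (minpoly.aeval ℚ α), Real.sqrt_eq_rpow]
    norm_num
  rw [Complex.mul_conj, Complex.normSq_eq_norm_sq, hnorm, Real.sq_sqrt q.cast_nonneg]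
  simp

/-- What the argument uses of an ordinary Weil `Q`-integer of weight one, seen at a single
complex embedding. -/
structure IsOrdinaryWeilNumber (p Q : ℕ) (α : ℂ) : Prop where
  mul_conj_self : α * conj α = Q
  dvd : p ∣ Q
  trace : ∃ a : ℤ, α + conj α = a ∧ ¬ (p : ℤ) ∣ a

theorem IsOrdinaryWeilNumber.conj {p Q : ℕ} {α : ℂ} (hα : IsOrdinaryWeilNumber p Q α) :
    IsOrdinaryWeilNumber p Q (conj α) := by
  obtain ⟨a, ha, hpa⟩ := hα.trace
  refine ⟨?_, hα.dvd, a, ?_, hpa⟩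
  · rw [Complex.conj_conj, mul_comm, hα.mul_conj_self]
  · rw [Complex.conj_conj, add_comm, ha]

/-- The traces `A k = α ^ k + ᾱ ^ k` satisfy `A (k + 2) = a A (k + 1) - Q A k`. -/
theorem exists_add_conj_pow_modEq {α : ℂ} {a Q : ℤ} (ha : α + conj α = a)
    (hQ : α * conj α = Q) (k : ℕ) :
    ∃ A : ℤ, α ^ (k + 1) + conj α ^ (k + 1) = A ∧ A ≡ a ^ (k + 1) [ZMOD Q] := by
  suffices ∀ k : ℕ, ∃ A B : ℤ, α ^ (k + 1) + conj α ^ (k + 1) = A ∧ A ≡ a ^ (k + 1) [ZMOD Q] ∧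
      α ^ (k + 2) + conj α ^ (k + 2) = B ∧ B ≡ a ^ (k + 2) [ZMOD Q] from
    let ⟨A, _, hA, hAa, _⟩ := this k; ⟨A, hA, hAa⟩
  intro k
  induction k with
  | zero =>
    refine ⟨a, a ^ 2 - 2 * Q, by simpa using ha, by simp, ?_, Int.modEq_iff_dvd.2 ⟨2, by ring⟩⟩
    push_cast
    linear_combination (α + conj α + a) * ha - 2 * hQ
  | succ k ih =>
    obtain ⟨A, B, hA, -, hB, hBa⟩ := ih
    refine ⟨B, a * B - Q * A, hB, hBa, ?_, ?_⟩
    · push_cast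
      linear_combination (α ^ (k + 2) + conj α ^ (k + 2)) * ha
        - (α ^ (k + 1) + conj α ^ (k + 1)) * hQ + a * hB - Q * hA
    · calc a * B - Q * A ≡ a * a ^ (k + 2) - 0 [ZMOD Q] :=
            (hBa.mul_left a).sub (Int.modEq_zero_iff_dvd.2 (dvd_mul_right _ _))
        _ = a ^ (k + 1 + 2) := by ring

namespace IsOrdinaryWeilNumber

variable {p Q : ℕ} {α : ℂ}

theorem pow (hp : p.Prime) (hα : IsOrdinaryWeilNumber p Q α) {k : ℕ} (hk : k ≠ 0) :
    IsOrdinaryWeilNumber p (Q ^ k) (α ^ k) := by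
  obtain ⟨a, ha, hpa⟩ := hα.trace
  obtain ⟨k, rfl⟩ := Nat.exists_eq_succ_of_ne_zero hk
  obtain ⟨A, hA, hAa⟩ := exists_add_conj_pow_modEq ha (by exact_mod_cast hα.mul_conj_self) k
  refine ⟨by rw [map_pow, ← mul_pow, hα.mul_conj_self]; push_cast; rfl,
    dvd_pow hα.dvd hk, A, by rw [map_pow, hA], fun hpA => hpa ?_⟩
  have hpQ : (p : ℤ) ∣ Q := Int.natCast_dvd_natCast.2 hα.dvd
  exact Int.Prime.dvd_pow' hp ((hAa.of_dvd hpQ).dvd_iff.1 hpA)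

theorem conj_ne_self (hp : p.Prime) (hα : IsOrdinaryWeilNumber p Q α) : conj α ≠ α := by
  obtain ⟨a, ha, hpa⟩ := hα.trace
  intro hreal
  have hsq : a ^ 2 = 4 * (Q : ℤ) := by
    have hnorm := hα.mul_conj_self
    rw [hreal] at ha hnorm
    exact_mod_cast (show ((a ^ 2 : ℤ) : ℂ) = ((4 * Q : ℤ) : ℂ) by
      push_cast
      linear_combination (-(a : ℂ) - 2 * α) * ha + 4 * hnorm)
  exact hpa (Int.Prime.dvd_pow' hp
    (hsq ▸ dvd_mul_of_dvd_right (Int.natCast_dvd_natCast.2 hα.dvd) 4))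

theorem finrank_adjoin (hp : p.Prime) (hα : IsOrdinaryWeilNumber p Q α) :
    Module.finrank ℚ ℚ⟮α⟯ = 2 := by
  obtain ⟨a, ha, -⟩ := hα.trace
  have hmonic : (X ^ 2 - C (a : ℚ) * X + C (Q : ℚ)).Monic := by monicity!
  have hroot : aeval α (X ^ 2 - C (a : ℚ) * X + C (Q : ℚ)) = 0 := by
    simp only [map_add, map_sub, map_mul, map_pow, aeval_X, aeval_C, eq_ratCast, Rat.cast_intCast,
      Rat.cast_natCast]
    linear_combination α * ha - hα.mul_conj_self
  have hint : IsIntegral ℚ α := ⟨_, hmonic, hroot⟩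
  rw [adjoin.finrank hint]
  refine le_antisymm ?_ ((minpoly.two_le_natDegree_iff hint).2 ?_)
  · exact (natDegree_le_of_dvd (minpoly.dvd ℚ α hroot) hmonic.ne_zero).trans (by compute_degree)
  · rintro ⟨x, rfl⟩
    exact hα.conj_ne_self hp (by simp)

theorem adjoin_pow (hp : p.Prime) (hα : IsOrdinaryWeilNumber p Q α) {k : ℕ} (hk : k ≠ 0) :
    ℚ⟮α ^ k⟯ = ℚ⟮α⟯ := by
  have : FiniteDimensional ℚ ℚ⟮α⟯ :=
    Module.finite_of_finrank_pos (by rw [finrank_adjoin hp hα]; norm_num)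
  refine eq_of_le_of_finrank_le ?_ ?_
  · exact adjoin_simple_le_iff.2 (pow_mem (mem_adjoin_simple_self ℚ α) k)
  · rw [finrank_adjoin hp hα, finrank_adjoin hp (hα.pow hp hk)]

theorem adjoin_conj (hα : IsOrdinaryWeilNumber p Q α) : ℚ⟮conj α⟯ = ℚ⟮α⟯ := by
  have conj_le {β : ℂ} (hβ : IsOrdinaryWeilNumber p Q β) : ℚ⟮conj β⟯ ≤ ℚ⟮β⟯ := by
    obtain ⟨b, hb, -⟩ := hβ.trace
    rw [adjoin_simple_le_iff, show conj β = b - β by linear_combination hb]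
    exact sub_mem (intCast_mem _ b) (mem_adjoin_simple_self ℚ β)
  exact (conj_le hα).antisymm (by simpa using conj_le hα.conj)

theorem eq_zero_of_eq_pow_mul (hα : IsOrdinaryWeilNumber p Q α) {N : ℕ} (hpN : p ∣ N)
    {β : ℂ} {b : ℤ} (hb : β + conj β = b) {m : ℕ} (h : α = N ^ m * β) : m = 0 := by
  obtain ⟨a, ha, hpa⟩ := hα.trace
  have hab : a = N ^ m * b := by
    exact_mod_cast (calc (a : ℂ) = α + conj α := ha.symm
      _ = N ^ m * (β + conj β) := by rw [h]; simp only [map_mul, map_pow, map_natCast]; ring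
      _ = N ^ m * b := by rw [hb])
  by_contra hm
  exact hpa (hab ▸ dvd_mul_of_dvd_left (dvd_pow (Int.natCast_dvd_natCast.2 hpN) hm) b)

theorem eq_of_zpow_mul_zpow_eq (hp : p.Prime) (hQ : 1 < Q) {β : ℂ}
    (hα : IsOrdinaryWeilNumber p Q α) (hβ : IsOrdinaryWeilNumber p Q β) {r s t u : ℤ}
    (hr : 0 < r) (ht : 0 < t) (h : (Q : ℂ) ^ (-s) * α ^ r = (Q : ℂ) ^ (-u) * β ^ t) :
    r = t ∧ s = u ∧ ℚ⟮α⟯ = ℚ⟮β⟯ := by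
  wlog hus : u ≤ s generalizing α β r s t u
  · obtain ⟨hrt, hsu, hαβ⟩ := this hβ hα ht hr h.symm (by omega)
    exact ⟨hrt.symm, hsu.symm, hαβ.symm⟩
  lift r to ℕ using hr.le
  lift t to ℕ using ht.le
  obtain ⟨m, rfl⟩ : ∃ m : ℕ, s = u + m := ⟨(s - u).toNat, by omega⟩
  have hr0 : r ≠ 0 := by omega
  have ht0 : t ≠ 0 := by omega
  have hQ0 : (Q : ℂ) ≠ 0 := by exact_mod_cast (by omega : Q ≠ 0)
  have hpow : α ^ r = (Q : ℂ) ^ m * β ^ t := by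
    calc α ^ r = (Q : ℂ) ^ (u + m) * ((Q : ℂ) ^ (-(u + m : ℤ)) * α ^ (r : ℤ)) := by
          rw [← mul_assoc, ← zpow_add₀ hQ0]; simp
      _ = (Q : ℂ) ^ (u + m) * ((Q : ℂ) ^ (-u) * β ^ (t : ℤ)) := by rw [h]
      _ = (Q : ℂ) ^ m * β ^ t := by rw [← mul_assoc, ← zpow_add₀ hQ0]; simp
  obtain ⟨b, hb, -⟩ := (hβ.pow hp ht0).trace
  obtain rfl : m = 0 := (hα.pow hp hr0).eq_zero_of_eq_pow_mul hα.dvd hb hpow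
  rw [pow_zero, one_mul] at hpow
  have hrt : r = t := by
    have hnorm := (hα.pow hp hr0).mul_conj_self
    rw [hpow, (hβ.pow hp ht0).mul_conj_self, Nat.cast_inj] at hnorm
    exact Nat.pow_right_injective hQ hnorm.symm
  refine ⟨by rw [hrt], by simp, ?_⟩
  rw [← hα.adjoin_pow hp hr0, ← hβ.adjoin_pow hp ht0, hpow]

end IsOrdinaryWeilNumber

/-- Let `α_i`, `β_j` (`1 ≤ i, j ≤ n`) be Weil `q`-integers of weight 1
whose traces are prime to `p` (ordinarity), and `r_i, s_i, t_j, u_j ∈ ℤ` with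
`r_i, t_j ≥ 1`. If `∏_i (1 - q^{-s_i} α_i^{r_i} z)(1 - q^{-s_i} conj(α_i)^{r_i} z)
= ∏_j (1 - q^{-u_j} β_j^{t_j} z)(1 - q^{-u_j} conj(β_j)^{t_j} z)` as polynomials in `z`,
then there is a permutation `σ` with `r_i = t_{σ(i)}`, `s_i = u_{σ(i)}` and
`ℚ(α_i) = ℚ(β_{σ(i)})`. -/
theorem stmt10 (p e : ℕ) (hp : p.Prime) (he : 1 ≤ e) (q : ℕ) (hq : q = p ^ e)
    (n : ℕ) (α β : Fin n → ℂ)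
    (hα : ∀ i, IsWeilInt q 1 (α i)) (hβ : ∀ j, IsWeilInt q 1 (β j))
    (hαtr : ∀ i, ∃ t : ℤ, α i + (starRingEnd ℂ) (α i) = (t : ℂ) ∧ ¬ ((p : ℤ) ∣ t))
    (hβtr : ∀ j, ∃ t : ℤ, β j + (starRingEnd ℂ) (β j) = (t : ℂ) ∧ ¬ ((p : ℤ) ∣ t))
    (r s t u : Fin n → ℤ) (hr : ∀ i, 1 ≤ r i) (ht : ∀ j, 1 ≤ t j)
    (hpoly : ∀ z : ℂ,
      ∏ i : Fin n, ((1 - (q : ℂ) ^ (-(s i)) * (α i) ^ (r i) * z) *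
        (1 - (q : ℂ) ^ (-(s i)) * ((starRingEnd ℂ) (α i)) ^ (r i) * z)) =
      ∏ j : Fin n, ((1 - (q : ℂ) ^ (-(u j)) * (β j) ^ (t j) * z) *
        (1 - (q : ℂ) ^ (-(u j)) * ((starRingEnd ℂ) (β j)) ^ (t j) * z))) :
    ∃ σ : Equiv.Perm (Fin n), ∀ i : Fin n,
      r i = t (σ i) ∧ s i = u (σ i) ∧
      IntermediateField.adjoin ℚ {α i} = IntermediateField.adjoin ℚ {β (σ i)} := by
  subst hq
  have hq1 : 1 < p ^ e := Nat.one_lt_pow (by omega) hp.one_lt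
  have hpq : p ∣ p ^ e := dvd_pow_self p (by omega)
  have hαo i : IsOrdinaryWeilNumber p (p ^ e) (α i) := ⟨(hα i).mul_conj_self, hpq, hαtr i⟩
  have hβo j : IsOrdinaryWeilNumber p (p ^ e) (β j) := ⟨(hβ j).mul_conj_self, hpq, hβtr j⟩
  obtain ⟨σ, hσ⟩ := exists_perm_eq_or_eq_of_forall_prod_eq Complex.conj_conj
    (f := fun i => ((p ^ e : ℕ) : ℂ) ^ (-(s i)) * α i ^ r i)
    (g := fun j => ((p ^ e : ℕ) : ℂ) ^ (-(u j)) * β j ^ t j)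
    (by simpa only [map_mul, map_zpow₀, map_natCast] using hpoly)
  refine ⟨σ, fun i => ?_⟩
  rcases hσ i with h | h
  · exact (hαo i).eq_of_zpow_mul_zpow_eq hp hq1 (hβo (σ i)) (hr i) (ht (σ i)) h
  · rw [map_mul, map_zpow₀, map_zpow₀, map_natCast] at h
    obtain ⟨hrt, hsu, hαβ⟩ :=
      (hαo i).eq_of_zpow_mul_zpow_eq hp hq1 (hβo (σ i)).conj (hr i) (ht (σ i)) h
    exact ⟨hrt, hsu, hαβ.trans (hβo (σ i)).adjoin_conj⟩
end

section
/- Let q = p^e, and let α, β be Weil q-integers of weight 1 with p ∤ Tr(α) and p ∤ Tr(β), and let r, t ≥ 1, s, u ∈ ℤ. If (1 − q^{−s}α^r t)(1 − q^{−s}conj(α)^r t) = (1 − q^{−u}β^t t)(1 − q^{−u}conj(β)^t t) as polynomials, then r = t, s = u, and ℚ(α) = ℚ(β). -/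
open IntermediateField

section QuadraticRoot

variable {A : Type*} [CommRing A] {m b Q : ℤ}

theorem exists_pow_succ_eq_mul_add (hQ : m ∣ Q) (n : ℕ) :
    ∃ c d : ℤ, c ≡ b ^ n [ZMOD m] ∧ m ∣ d ∧
      ∀ x : A, x ^ 2 = b * x - Q → x ^ (n + 1) = c * x + d := by
  induction n with
  | zero => exact ⟨1, 0, by simp, dvd_zero m, fun x _ => by simp⟩
  | succ n ih =>
    obtain ⟨c, d, hc, hd, hpow⟩ := ih
    refine ⟨b * c + d, -(c * Q), ?_, (dvd_mul_of_dvd_right hQ c).neg_right, fun x hx => ?_⟩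
    · calc b * c + d ≡ b * b ^ n + 0 [ZMOD m] :=
            (hc.mul_left b).add (Int.modEq_zero_iff_dvd.mpr hd)
        _ = b ^ (n + 1) := by ring
    · rw [pow_succ, hpow x hx]
      push_cast
      linear_combination (c : A) * hx

theorem exists_pow_add_pow_eq_intCast (hQ : m ∣ Q) {x y : A} (hsum : x + y = b)
    (hprod : x * y = Q) {n : ℕ} (hn : n ≠ 0) :
    ∃ T : ℤ, x ^ n + y ^ n = T ∧ T ≡ b ^ n [ZMOD m] := by
  obtain ⟨n, rfl⟩ := Nat.exists_eq_succ_of_ne_zero hn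
  obtain ⟨c, d, hc, hd, hpow⟩ := exists_pow_succ_eq_mul_add (A := A) (b := b) hQ n
  refine ⟨c * b + 2 * d, ?_, ?_⟩
  · rw [hpow x (by linear_combination x * hsum - hprod),
      hpow y (by linear_combination y * hsum - hprod)]
    push_cast
    linear_combination (c : A) * hsum
  · calc c * b + 2 * d ≡ b ^ n * b + 2 * 0 [ZMOD m] :=
          (hc.mul_right b).add ((Int.modEq_zero_iff_dvd.mpr hd).mul_left 2)
      _ = b ^ (n + 1) := by ring

theorem not_dvd_of_modEq_pow {p c : ℤ} (hp : Prime p) (hb : ¬ p ∣ b) {n : ℕ}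
    (hc : c ≡ b ^ n [ZMOD p]) : ¬ p ∣ c :=
  fun h => hb (hp.dvd_of_dvd_pow (hc.dvd_iff.mp h))

theorem mem_of_pow_succ_mem {L S : Type*} [Field L] [CharZero L] [SetLike S L]
    [SubfieldClass S L] {K : S} {p : ℤ} (hp : Prime p) (hb : ¬ p ∣ b) (hQ : p ∣ Q) {x : L}
    (hx : x ^ 2 = b * x - Q) {n : ℕ} (hmem : x ^ (n + 1) ∈ K) : x ∈ K := by
  obtain ⟨c, d, hc, -, hpow⟩ := exists_pow_succ_eq_mul_add (A := L) (b := b) hQ n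
  have hc0 : (c : L) ≠ 0 := by
    exact_mod_cast fun h : c = 0 => not_dvd_of_modEq_pow hp hb hc (h ▸ dvd_zero p)
  have hx' : x = (c : L)⁻¹ * (x ^ (n + 1) - d) := by
    rw [hpow x hx]
    field_simp
    ring
  rw [hx']
  exact mul_mem (inv_mem (intCast_mem K c)) (sub_mem hmem (intCast_mem K d))

end QuadraticRoot

theorem eq_or_eq_of_add_eq_add_of_mul_eq_mul {R : Type*} [CommRing R] [IsDomain R]
    {x x' y y' : R} (hsum : x + x' = y + y') (hprod : x * x' = y * y') : x = y ∨ x = y' := by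
  have h : (x - y) * (x - y') = 0 := by linear_combination x * hsum - hprod
  simpa [sub_eq_zero] using h

theorem add_eq_add_and_mul_eq_mul_of_forall_eq {K : Type*} [Field K] [CharZero K]
    {x x' y y' : K} (h : ∀ z, (1 - x * z) * (1 - x' * z) = (1 - y * z) * (1 - y' * z)) :
    x + x' = y + y' ∧ x * x' = y * y' :=
  ⟨by linear_combination (h (-1) - h 1) / 2, by linear_combination (h 1 + h (-1)) / 2⟩

theorem eq_of_zpow_neg_mul_eq_zpow_neg_mul {K : Type*} [Field K] [CharZero K] {p q a b s u : ℤ}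
    (hpq : p ∣ q) (hq : q ≠ 0) (ha : ¬ p ∣ a) (hb : ¬ p ∣ b)
    (h : (q : K) ^ (-s) * a = (q : K) ^ (-u) * b) : s = u := by
  wlog hsu : s ≤ u generalizing s u a b
  · exact (this hb ha h.symm (le_of_not_ge hsu)).symm
  obtain hsu | rfl := hsu.lt_or_eq
  · obtain ⟨k, rfl⟩ : ∃ k : ℕ, u = s + (k + 1) := ⟨(u - s - 1).toNat, by omega⟩
    have hq' : (q : K) ≠ 0 := by exact_mod_cast hq
    have hshift : (q : K) ^ (-s) = (q : K) ^ (-(s + (k + 1))) * (q : K) ^ (k + 1) := by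
      rw [← zpow_natCast, ← zpow_add₀ hq']
      congr 1
      push_cast
      ring
    rw [hshift, mul_assoc] at h
    have hba : q ^ (k + 1) * a = b := by
      exact_mod_cast mul_left_cancel₀ (zpow_ne_zero _ hq') h
    exact absurd (hba ▸ (hpq.trans (dvd_pow_self q k.succ_ne_zero)).mul_right a) hb
  · rfl

theorem IsWeilInt.mul_conj_eq {q : ℕ} {x : ℂ} (hx : IsWeilInt q 1 x) :
    x * (starRingEnd ℂ) x = q := by
  have hnorm : ‖x‖ = √(q : ℝ) := by
    rw [hx.2 x (minpoly.aeval ℚ x), Real.sqrt_eq_rpow]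
    norm_num
  rw [Complex.mul_conj, Complex.normSq_eq_norm_sq, hnorm, Real.sq_sqrt (Nat.cast_nonneg q)]
  norm_cast

theorem mem_adjoin_simple_of_pow_eq {p a b Q : ℤ} (hp : Prime p) (ha : ¬ p ∣ a) (hQ : p ∣ Q)
    {x y : ℂ} (hxa : x + (starRingEnd ℂ) x = a) (hxQ : x * (starRingEnd ℂ) x = Q)
    (hyb : y + (starRingEnd ℂ) y = b) {n : ℕ} (hn : n ≠ 0)
    (h : x ^ n = y ^ n ∨ x ^ n = (starRingEnd ℂ) y ^ n) : x ∈ ℚ⟮y⟯ := by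
  have hy : y ∈ ℚ⟮y⟯ := mem_adjoin_simple_self ℚ y
  have hy' : (starRingEnd ℂ) y ∈ ℚ⟮y⟯ := by
    rw [show (starRingEnd ℂ) y = b - y by linear_combination hyb]
    exact sub_mem (intCast_mem _ b) hy
  obtain ⟨n, rfl⟩ := Nat.exists_eq_succ_of_ne_zero hn
  refine mem_of_pow_succ_mem hp ha hQ (n := n) (by linear_combination x * hxa - hxQ) ?_
  rcases h with h | h <;> rw [h]
  exacts [pow_mem hy _, pow_mem hy' _]

theorem adjoin_simple_eq_of_pow_add_conj_pow_eq {p a b Q : ℤ} (hp : Prime p) (ha : ¬ p ∣ a)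
    (hb : ¬ p ∣ b) (hQ : p ∣ Q) {x y : ℂ} (hxa : x + (starRingEnd ℂ) x = a)
    (hxQ : x * (starRingEnd ℂ) x = Q) (hyb : y + (starRingEnd ℂ) y = b)
    (hyQ : y * (starRingEnd ℂ) y = Q) {n : ℕ} (hn : n ≠ 0)
    (h : x ^ n + (starRingEnd ℂ) x ^ n = y ^ n + (starRingEnd ℂ) y ^ n) : ℚ⟮x⟯ = ℚ⟮y⟯ := by
  have hprod : x ^ n * (starRingEnd ℂ) x ^ n = y ^ n * (starRingEnd ℂ) y ^ n := by
    rw [← mul_pow, ← mul_pow, hxQ, hyQ]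
  exact le_antisymm
    (adjoin_simple_le_iff.mpr (mem_adjoin_simple_of_pow_eq hp ha hQ hxa hxQ hyb hn
      (eq_or_eq_of_add_eq_add_of_mul_eq_mul h hprod)))
    (adjoin_simple_le_iff.mpr (mem_adjoin_simple_of_pow_eq hp hb hQ hyb hyQ hxa hn
      (eq_or_eq_of_add_eq_add_of_mul_eq_mul h.symm hprod.symm)))

/-- Let `α`, `β` be Weil `q`-integers of weight 1 with `p ∤ Tr(α)` and
`p ∤ Tr(β)` (`q = p ^ e`), and `r, t ≥ 1`, `s, u ∈ ℤ`. If
`(1 - q^{-s} α^r z)(1 - q^{-s} conj(α)^r z) = (1 - q^{-u} β^t z)(1 - q^{-u} conj(β)^t z)`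
as polynomials in `z`, then `r = t`, `s = u` and `ℚ(α) = ℚ(β)`. -/
theorem stmt11 (p e : ℕ) (hp : p.Prime) (he : 1 ≤ e) (q : ℕ) (hq : q = p ^ e)
    (α β : ℂ) (hα : IsWeilInt q 1 α) (hβ : IsWeilInt q 1 β)
    (hαtr : ∃ a : ℤ, α + (starRingEnd ℂ) α = (a : ℂ) ∧ ¬ ((p : ℤ) ∣ a))
    (hβtr : ∃ b : ℤ, β + (starRingEnd ℂ) β = (b : ℂ) ∧ ¬ ((p : ℤ) ∣ b))
    (r t : ℤ) (s u : ℤ) (hr : 1 ≤ r) (ht : 1 ≤ t)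
    (hpoly : ∀ z : ℂ,
      (1 - (q : ℂ) ^ (-s) * α ^ r * z) * (1 - (q : ℂ) ^ (-s) * ((starRingEnd ℂ) α) ^ r * z) =
      (1 - (q : ℂ) ^ (-u) * β ^ t * z) * (1 - (q : ℂ) ^ (-u) * ((starRingEnd ℂ) β) ^ t * z)) :
    r = t ∧ s = u ∧
      IntermediateField.adjoin ℚ {α} = IntermediateField.adjoin ℚ {β} := by
  have hp' : Prime (p : ℤ) := Nat.prime_iff_prime_int.mp hp
  have hq1 : 1 < q := hq ▸ Nat.one_lt_pow (by omega) hp.one_lt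
  have hpq : (p : ℤ) ∣ q := by rw [hq]; push_cast; exact dvd_pow_self _ (by omega)
  obtain ⟨a, ha, hpa⟩ := hαtr
  obtain ⟨b, hb, hpb⟩ := hβtr
  have hαq : α * (starRingEnd ℂ) α = ((q : ℤ) : ℂ) := by exact_mod_cast hα.mul_conj_eq
  have hβq : β * (starRingEnd ℂ) β = ((q : ℤ) : ℂ) := by exact_mod_cast hβ.mul_conj_eq
  lift r to ℕ using (by omega)
  lift t to ℕ using (by omega)
  simp only [zpow_natCast] at hpoly
  obtain ⟨hsum, hprod⟩ := add_eq_add_and_mul_eq_mul_of_forall_eq hpoly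
  obtain ⟨Ta, hTa, hTa_mod⟩ := exists_pow_add_pow_eq_intCast hpq ha hαq (n := r) (by omega)
  obtain ⟨Tb, hTb, hTb_mod⟩ := exists_pow_add_pow_eq_intCast hpq hb hβq (n := t) (by omega)
  obtain rfl : s = u := eq_of_zpow_neg_mul_eq_zpow_neg_mul (K := ℂ) hpq (by omega)
    (not_dvd_of_modEq_pow hp' hpa hTa_mod) (not_dvd_of_modEq_pow hp' hpb hTb_mod)
    (by rw [← hTa, ← hTb]; linear_combination hsum)
  have hqs : (q : ℂ) ^ (-s) ≠ 0 := zpow_ne_zero _ (by exact_mod_cast (by omega : q ≠ 0))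
  obtain rfl : r = t := by
    have hqrt : (α * (starRingEnd ℂ) α) ^ r = (β * (starRingEnd ℂ) β) ^ t := by
      rw [mul_pow, mul_pow]
      exact mul_left_cancel₀ (mul_ne_zero hqs hqs) (by linear_combination hprod)
    rw [hαq, hβq] at hqrt
    exact Nat.pow_right_injective hq1 (by exact_mod_cast hqrt)
  refine ⟨rfl, rfl, ?_⟩
  exact adjoin_simple_eq_of_pow_add_conj_pow_eq hp' hpa hpb hpq ha hαq hb hβq (n := r) (by omega)
    (mul_left_cancel₀ hqs (by linear_combination hsum))
end

section
/- Let q = p^e, F = ℚ(α) an imaginary quadratic field where α is a Weil q-integer of weight 1 with p ∤ Tr(α). Then for every r ≥ 1, the polynomial (1 − α^r t)(1 − conj(α)^r t) ∈ ℤ[t] is irreducible over ℚ, i.e., α^r ∉ ℚ. -/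
/-! From `α + ᾱ = t` and `α ᾱ = q`, `α` is a root of `X² - tX + q`, so by induction
`α^(n+1) = q b + c α` with integers `b, c` and `c ≡ tⁿ (mod q)`. Since `p ∣ q` and `p ∤ t`,
`c ≠ 0`; and `α` is not real, because otherwise `t² = 4q` would be divisible by `p`.
Hence `Im(α^(n+1)) = c · Im α ≠ 0`, while `α^(n+1)` and its conjugate have rational sum and
product, so its minimal polynomial over `ℚ` is quadratic. -/

open ComplexConjugate Polynomial

theorem IsWeilInt.mul_conj_eq_s17 {q : ℕ} {α : ℂ} (hα : IsWeilInt q 1 α) : α * conj α = q := by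
  have hnorm : ‖α‖ = √q := by
    rw [Real.sqrt_eq_rpow]
    simpa using hα.2 α (minpoly.aeval ℚ α)
  rw [Complex.mul_conj, ← Complex.sq_norm, hnorm, Real.sq_sqrt q.cast_nonneg,
    Complex.ofReal_natCast]

theorem exists_pow_succ_eq_of_sq_eq {R : Type*} [CommRing R] {x : R} {t q : ℤ}
    (hx : x ^ 2 = t * x - q) (n : ℕ) :
    ∃ b c : ℤ, x ^ (n + 1) = q * b + c * x ∧ c ≡ t ^ n [ZMOD q] := by
  induction n with
  | zero => exact ⟨0, 1, by simp, by simp⟩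
  | succ n ih =>
    obtain ⟨b, c, hbc, hc⟩ := ih
    refine ⟨-c, q * b + c * t, ?_, ?_⟩
    · rw [pow_succ, hbc]
      push_cast
      linear_combination c * hx
    · simpa [pow_succ] using ((Int.modEq_zero_iff_dvd.2 dvd_rfl).mul_right b).add (hc.mul_right t)

theorem Complex.im_ne_zero_of_add_conj_of_mul_conj {α : ℂ} {t q : ℤ}
    (ht : α + conj α = t) (hq : α * conj α = q) (hdisc : t ^ 2 ≠ 4 * q) : α.im ≠ 0 := by
  intro him
  rw [Complex.conj_eq_iff_im.2 him] at ht hq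
  apply hdisc
  exact_mod_cast (by linear_combination (t + α + α) * ht.symm + 4 * hq : (t : ℂ) ^ 2 = 4 * q)

theorem Complex.natDegree_minpoly_eq_two {z : ℂ} {s n : ℚ}
    (hs : z + conj z = s) (hn : z * conj z = n) (hz : z.im ≠ 0) :
    (minpoly ℚ z).natDegree = 2 := by
  set P : ℚ[X] := X ^ 2 - C s * X + C n
  have hP : P.Monic := by unfold P; monicity!
  have hPdeg : P.natDegree = 2 := by unfold P; compute_degree!
  have hPz : aeval z P = 0 := by
    simp only [P, map_add, map_sub, map_mul, map_pow, aeval_X, aeval_C, eq_ratCast]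
    linear_combination z * hs - hn
  have hint : IsIntegral ℚ z := ⟨P, hP, hPz⟩
  have hle : (minpoly ℚ z).natDegree ≤ 2 :=
    hPdeg ▸ natDegree_le_of_dvd (minpoly.dvd ℚ z hPz) hP.ne_zero
  have hge : 2 ≤ (minpoly ℚ z).natDegree := by
    rw [minpoly.two_le_natDegree_iff hint]
    rintro ⟨a, rfl⟩
    exact hz (by simp)
  omega

/-- For `α` a Weil `q`-integer of weight 1 with `p ∤ Tr(α)` (so `ℚ(α)` is
imaginary quadratic), for every `r ≥ 1` the polynomial `(1 - α^r t)(1 - conj(α)^r t)` is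
irreducible over `ℚ`, i.e. `α ^ r ∉ ℚ` (equivalently, its minimal polynomial over `ℚ`
has degree 2). -/
theorem stmt17 (p e : ℕ) (hp : p.Prime) (he : 1 ≤ e) (q : ℕ) (hq : q = p ^ e)
    (α : ℂ) (hα : IsWeilInt q 1 α)
    (htr : ∃ t : ℤ, α + (starRingEnd ℂ) α = (t : ℂ) ∧ ¬ ((p : ℤ) ∣ t)) :
    ∀ r : ℕ, 1 ≤ r →
      (∀ a : ℚ, (a : ℂ) ≠ α ^ r) ∧ (minpoly ℚ (α ^ r)).natDegree = 2 := by
  obtain ⟨t, ht, hpt⟩ := htr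
  have hpz : Prime (p : ℤ) := Nat.prime_iff_prime_int.mp hp
  have hpq : (p : ℤ) ∣ q := by
    subst hq
    exact_mod_cast dvd_pow_self p (by omega)
  have hnorm : α * conj α = ((q : ℤ) : ℂ) := by exact_mod_cast hα.mul_conj_eq_s17
  have him : α.im ≠ 0 := Complex.im_ne_zero_of_add_conj_of_mul_conj ht hnorm fun hdisc =>
    hpt (hpz.dvd_of_dvd_pow (hdisc ▸ dvd_mul_of_dvd_right hpq 4))
  intro r hr
  obtain ⟨n, rfl⟩ : ∃ n, r = n + 1 := ⟨r - 1, by omega⟩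
  have hquad : α ^ 2 = t * α - (q : ℤ) := by linear_combination α * ht - hnorm
  obtain ⟨b, c, hbc, hc⟩ := exists_pow_succ_eq_of_sq_eq hquad n
  have hc0 : c ≠ 0 := by
    rintro rfl
    exact hpt (hpz.dvd_of_dvd_pow (hpq.trans (sub_zero (t ^ n) ▸ hc.dvd)))
  have him_pow : (α ^ (n + 1)).im ≠ 0 := by
    rw [hbc]
    simp [hc0, him]
  refine ⟨fun a ha => him_pow (ha ▸ Complex.ratCast_im a),
    Complex.natDegree_minpoly_eq_two (s := 2 * q * b + c * t) (n := q ^ (n + 1)) ?_ ?_ him_pow⟩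
  · simp only [hbc, map_add, map_mul, map_intCast]
    push_cast
    linear_combination c * ht
  · rw [map_pow, ← mul_pow, hnorm]
    norm_cast
end
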